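/- arXiv:1302.0668 — 4 statements merged into one kernel-verified Lean document; each statement's English description precedes it below -/
import Mathlib

section
/- Let H_n be the n×n lower Hessenberg matrix with superdiagonal entries alternating -1, 1, -1, ... (starting with -1), main diagonal entries all 2 except the (n,n) entry which is 1, subdiagonal entries all 0, second subdiagonal (entries (i+2, i)) all 1, and all other entries 0. Then the permanent of H_n equals F_{n+1}, the (n+1)st Fibonacci number. -/
open Finset Nat

def lucas : ℕ → ℕ
  | 0 => 2
  | 1 => 1
  | n + 2 => lucas (n + 1) + lucas n

def Hmat (n : ℕ) : Matrix (Fin n) (Fin n) ℤ := Matrix.of fun i j =>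
  if (j : ℕ) = (i : ℕ) + 1 then (-1) ^ ((i : ℕ) + 1)
  else if (i : ℕ) = (j : ℕ) then (if (i : ℕ) = n - 1 then 1 else 2)
  else if (i : ℕ) = (j : ℕ) + 2 then 1 else 0

/-!
Let `HmatCorner n d` be `Hmat n` with bottom-right entry `d`; then `Hmat n = HmatCorner n 1`, and
the leading principal minors of `HmatCorner n d` are the `HmatCorner m 2`. Expanding the permanent
of `HmatCorner (n + 3) d` along its last column, and the non-principal minor along a column and
then a row with a single nonzero entry, gives
`per (HmatCorner (n + 3) d) = d * per (HmatCorner (n + 2) 2) - per (HmatCorner n 2)`,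
the sign being the product of two consecutive superdiagonal entries. By induction
`per (HmatCorner n d) = d * (F (n + 2) - 1) - (F n - 1)`, and `d = 1` gives
`F (n + 2) - F n = F (n + 1)`.
-/

namespace Matrix

variable {R : Type*} [CommSemiring R] {n : ℕ}

theorem permanent_succ_column_zero (A : Matrix (Fin (n + 1)) (Fin (n + 1)) R) :
    A.permanent = ∑ i, A i 0 * (A.submatrix i.succAbove Fin.succ).permanent := by
  rw [permanent, Finset.univ_perm_fin_succ, ← univ_product_univ]
  simp only [sum_map, Equiv.toEmbedding_apply, sum_product]
  refine sum_congr rfl fun i _ => Fin.cases ?_ (fun i => ?_) i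
  · simp [permanent, mul_sum, Fin.prod_univ_succ, Equiv.Perm.decomposeFin_symm_apply_succ]
  · rw [← permanent_permute_cols i.cycleRange, permanent, mul_sum]
    refine sum_congr rfl fun σ _ => ?_
    rw [Fin.prod_univ_succ, Equiv.Perm.decomposeFin_symm_apply_zero]
    congr 1
    refine prod_congr rfl fun j _ => ?_
    simp [Equiv.Perm.decomposeFin_symm_apply_succ, Fin.succAbove_cycleRange]

theorem permanent_succ_column (A : Matrix (Fin (n + 1)) (Fin (n + 1)) R) (j : Fin (n + 1)) :
    A.permanent = ∑ i, A i j * (A.submatrix i.succAbove j.succAbove).permanent := by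
  rw [← permanent_permute_rows j.cycleRange.symm, permanent_succ_column_zero]
  simp only [submatrix_apply, id_eq, Fin.cycleRange_symm_zero, submatrix_submatrix]
  congr! with i
  ext k
  simp [Fin.cycleRange_symm_succ]

theorem permanent_succ_row (A : Matrix (Fin (n + 1)) (Fin (n + 1)) R) (i : Fin (n + 1)) :
    A.permanent = ∑ j, A i j * (A.submatrix i.succAbove j.succAbove).permanent := by
  rw [← permanent_transpose, permanent_succ_column _ i]
  simp only [transpose_apply, ← transpose_submatrix, permanent_transpose]

theorem permanent_succ_column_of_single (A : Matrix (Fin (n + 1)) (Fin (n + 1)) R)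
    {i j : Fin (n + 1)} (h : ∀ k ≠ i, A k j = 0) :
    A.permanent = A i j * (A.submatrix i.succAbove j.succAbove).permanent := by
  rw [permanent_succ_column _ j, Fintype.sum_eq_single i fun k hk => by rw [h k hk, zero_mul]]

theorem permanent_succ_row_of_single (A : Matrix (Fin (n + 1)) (Fin (n + 1)) R)
    {i j : Fin (n + 1)} (h : ∀ k ≠ j, A i k = 0) :
    A.permanent = A i j * (A.submatrix i.succAbove j.succAbove).permanent := by
  rw [permanent_succ_row _ i, Fintype.sum_eq_single j fun k hk => by rw [h k hk, zero_mul]]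

theorem permanent_fin_two (A : Matrix (Fin 2) (Fin 2) R) :
    A.permanent = A 0 0 * A 1 1 + A 1 0 * A 0 1 := by
  simp [permanent_succ_column_zero, Fin.sum_univ_two, permanent_unique]

end Matrix

def HmatCorner (n : ℕ) (d : ℤ) : Matrix (Fin n) (Fin n) ℤ := Matrix.of fun i j =>
  if (j : ℕ) = (i : ℕ) + 1 then (-1) ^ ((i : ℕ) + 1)
  else if (i : ℕ) = (j : ℕ) then (if (i : ℕ) = n - 1 then d else 2)
  else if (i : ℕ) = (j : ℕ) + 2 then 1 else 0

namespace HmatCorner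

open Matrix

theorem submatrix_castSucc (n : ℕ) (d : ℤ) :
    (HmatCorner (n + 1) d).submatrix Fin.castSucc Fin.castSucc = HmatCorner n 2 := by
  ext i j
  simp only [HmatCorner, submatrix_apply, of_apply, Fin.val_castSucc]
  split_ifs <;> omega

theorem permanent_superdiagonal_minor (n : ℕ) (d : ℤ) :
    ((HmatCorner (n + 3) d).submatrix (Fin.last (n + 1)).castSucc.succAbove
      Fin.castSucc).permanent = (-1) ^ (n + 1) * (HmatCorner n 2).permanent := by
  set M := (HmatCorner (n + 3) d).submatrix (Fin.last (n + 1)).castSucc.succAbove Fin.castSucc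
  set M' := M.submatrix (Fin.last n).castSucc.succAbove Fin.castSucc
  have hcol : ∀ i ≠ (Fin.last n).castSucc, M i (Fin.last _) = 0 := by
    intro i hi
    simp only [M, HmatCorner, submatrix_apply, of_apply, Fin.succAbove, Fin.lt_def,
      ne_eq, Fin.ext_iff, Fin.val_last, Fin.val_castSucc, apply_ite Fin.val, Fin.val_succ] at hi ⊢
    split_ifs <;> omega
  have hrow : ∀ j ≠ Fin.last n, M' (Fin.last n) j = 0 := by
    intro j hj
    simp only [M', M, HmatCorner, submatrix_apply, of_apply, Fin.succAbove, Fin.lt_def,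
      ne_eq, Fin.ext_iff, Fin.val_last, Fin.val_castSucc, apply_ite Fin.val, Fin.val_succ] at hj ⊢
    split_ifs <;> omega
  have hminor : M'.submatrix Fin.castSucc Fin.castSucc = HmatCorner n 2 := by
    ext i j
    simp only [M', M, HmatCorner, submatrix_apply, of_apply, Fin.succAbove, Fin.lt_def,
      Fin.val_last, Fin.val_castSucc, apply_ite Fin.val, Fin.val_succ]
    split_ifs <;> omega
  have hsign : M (Fin.last n).castSucc (Fin.last _) = (-1) ^ (n + 1) := by simp [M, HmatCorner]
  have hone : M' (Fin.last n) (Fin.last n) = 1 := by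
    simp only [M', M, HmatCorner, submatrix_apply, of_apply, Fin.val_castSucc,
      Fin.succAbove_castSucc_self, Fin.succ_last, Fin.val_last]
    split_ifs <;> omega
  rw [permanent_succ_column_of_single M hcol, Fin.succAbove_last,
    permanent_succ_row_of_single M' hrow, Fin.succAbove_last, hminor, hsign, hone, one_mul]

theorem permanent_add_three (n : ℕ) (d : ℤ) :
    (HmatCorner (n + 3) d).permanent
      = d * (HmatCorner (n + 2) 2).permanent - (HmatCorner n 2).permanent := by
  set A := HmatCorner (n + 3) d
  have hA : ∀ i, i ≠ Fin.last _ ∧ i ≠ (Fin.last (n + 1)).castSucc → A i (Fin.last _) = 0 := by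
    intro i hi
    simp only [A, HmatCorner, of_apply, Fin.val_last, ne_eq, Fin.ext_iff, Fin.val_castSucc] at hi ⊢
    split_ifs <;> omega
  have hcorner : A (Fin.last _) (Fin.last _) = d := by simp [A, HmatCorner]
  have hsign : A (Fin.last (n + 1)).castSucc (Fin.last _) = (-1) ^ (n + 2) := by
    simp [A, HmatCorner]
  rw [permanent_succ_column A (Fin.last _),
    Fintype.sum_eq_add _ _ (Fin.castSucc_lt_last _).ne' fun i hi => by rw [hA i hi, zero_mul],
    Fin.succAbove_last, submatrix_castSucc, permanent_superdiagonal_minor, hcorner, hsign,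
    ← mul_assoc, ← pow_add, Odd.neg_one_pow ⟨n + 1, by ring⟩]
  ring

theorem permanent_eq (n : ℕ) (d : ℤ) :
    (HmatCorner n d).permanent = d * (fib (n + 2) - 1) - (fib n - 1) := by
  match n with
  | 0 => simp [permanent_isEmpty]
  | 1 => simp [permanent_unique, HmatCorner, fib_add_two]
  | 2 => simp [permanent_fin_two, HmatCorner, fib_add_two, mul_comm]
  | n + 3 =>
    rw [permanent_add_three, permanent_eq (n + 2), permanent_eq n]
    push_cast [fib_add_two]
    ring

end HmatCorner

theorem permanent_H (n : ℕ) :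
    Matrix.permanent (Hmat n) = (Nat.fib (n + 1) : ℤ) := by
  have hfib : (fib (n + 2) : ℤ) = fib n + fib (n + 1) := mod_cast fib_add_two
  calc (Hmat n).permanent = (HmatCorner n 1).permanent := rfl
    _ = fib (n + 1) := by rw [HmatCorner.permanent_eq]; linarith
end

section
/- Let N_n be the n×n lower Hessenberg matrix with (1,1) entry 3, (1,2) entry -2, superdiagonal entries (i,i+1) = (-1)^i for 2 ≤ i ≤ n-1, main diagonal entries 2 for i ≥ 2, second subdiagonal entries all 1, and all other entries 0. Then for n ≥ 2, per N_n = Σ_{i=0}^{n} L_i, the sum of the first n+1 Lucas numbers. -/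
open Finset Nat

def Nmat (n : ℕ) : Matrix (Fin n) (Fin n) ℤ := Matrix.of fun i j =>
  if (i : ℕ) = 0 ∧ (j : ℕ) = 0 then 3
  else if (i : ℕ) = 0 ∧ (j : ℕ) = 1 then -2
  else if (j : ℕ) = (i : ℕ) + 1 then (-1) ^ ((i : ℕ) + 1)
  else if (i : ℕ) = (j : ℕ) then 2
  else if (i : ℕ) = (j : ℕ) + 2 then 1 else 0

/-
Rows and columns are indexed from 0. Expanding per N_{m+4} along its last row, whose only
nonzero entries are 1 in column m+1 and 2 in the corner, gives 2 per N_{m+3} plus the minor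
without column m+1. That minor has a single nonzero entry (-1)^{m+3} in its last column, at the
corner, and the same happens once more with (-1)^{m+2}, leaving N_{m+1}. Hence
per N_{m+4} = 2 per N_{m+3} - per N_{m+1}. The partial sums S_n of Lucas numbers obey the same
recurrence, since S_{n+1} - S_n = L_{n+1} = L_n + L_{n-1}, and the two sequences agree for
n = 1, 2, 3.
-/

namespace Matrix

variable {R : Type*} [CommSemiring R] {n : ℕ}

theorem permanent_eq_mul_of_column_eq_zero (A : Matrix (Fin (n + 1)) (Fin (n + 1)) R)
    (i j : Fin (n + 1)) (h : ∀ k, k ≠ i → A k j = 0) :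
    A.permanent = A i j * (A.submatrix i.succAbove j.succAbove).permanent := by
  rw [permanent_succ_column A j, Fintype.sum_eq_single i fun k hk => by rw [h k hk, zero_mul]]

end Matrix

theorem Fin.val_succAbove {n : ℕ} (p : Fin (n + 1)) (i : Fin n) :
    (p.succAbove i : ℕ) = if (i : ℕ) < p then (i : ℕ) else i + 1 := by
  rw [Fin.succAbove]
  split_ifs <;> simp_all [Fin.lt_def]

section Nmat

variable {n : ℕ} {i j : Fin n}

theorem Nmat_apply_eq_zero (h₁ : (j : ℕ) ≠ i + 1) (h₂ : (i : ℕ) ≠ j) (h₃ : (i : ℕ) ≠ j + 2) :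
    Nmat n i j = 0 := by
  simp only [Nmat, Matrix.of_apply]
  split_ifs <;> omega

theorem Nmat_apply_of_val_eq_succ (hi : (i : ℕ) ≠ 0) (h : (j : ℕ) = i + 1) :
    Nmat n i j = (-1) ^ (j : ℕ) := by
  simp only [Nmat, Matrix.of_apply, h]
  split_ifs <;> omega

theorem Nmat_apply_of_val_eq (hi : (i : ℕ) ≠ 0) (h : (i : ℕ) = j) : Nmat n i j = 2 := by
  simp only [Nmat, Matrix.of_apply]
  split_ifs <;> omega

theorem Nmat_apply_of_val_eq_add_two (h : (i : ℕ) = j + 2) : Nmat n i j = 1 := by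
  simp only [Nmat, Matrix.of_apply]
  split_ifs <;> omega

theorem Nmat_submatrix {k : ℕ} (f g : Fin k → Fin n) (hf : ∀ i, (f i : ℕ) = i)
    (hg : ∀ j, (g j : ℕ) = j) : (Nmat n).submatrix f g = Nmat k := by
  ext i j
  simp only [Nmat, Matrix.submatrix_apply, Matrix.of_apply, hf, hg]

end Nmat

theorem permanent_Nmat_submatrix_castSucc_succAbove (m : ℕ) :
    ((Nmat (m + 4)).submatrix Fin.castSucc (Fin.succAbove ⟨m + 1, by omega⟩)).permanent =
      -(Nmat (m + 1)).permanent := by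
  set D := (Nmat (m + 4)).submatrix Fin.castSucc (Fin.succAbove ⟨m + 1, by omega⟩)
  have hcol : ∀ i, i ≠ Fin.last (m + 2) → D i (Fin.last (m + 2)) = 0 := by
    intro i hi
    have := Fin.val_lt_last hi
    apply Nmat_apply_eq_zero <;>
      simp only [Fin.val_succAbove, Fin.val_castSucc, Fin.val_last] <;> split_ifs <;> omega
  have hcol' : ∀ i, i ≠ Fin.last (m + 1) →
      D.submatrix Fin.castSucc Fin.castSucc i (Fin.last (m + 1)) = 0 := by
    intro i hi
    have := Fin.val_lt_last hi
    apply Nmat_apply_eq_zero <;>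
      simp only [Fin.val_succAbove, Fin.val_castSucc, Fin.val_last] <;> split_ifs <;> omega
  have hminor : (D.submatrix Fin.castSucc Fin.castSucc).submatrix Fin.castSucc Fin.castSucc =
      Nmat (m + 1) := by
    refine Nmat_submatrix _ _ (fun _ => rfl) fun j => ?_
    simp only [Fin.val_succAbove, Fin.val_castSucc]
    split_ifs <;> omega
  rw [Matrix.permanent_eq_mul_of_column_eq_zero D _ _ hcol, Fin.succAbove_last,
    Matrix.permanent_eq_mul_of_column_eq_zero _ _ _ hcol', Fin.succAbove_last, hminor,
    Matrix.submatrix_apply]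
  have e₁ : D (Fin.last (m + 2)) (Fin.last (m + 2)) = (-1) ^ (m + 3) := by
    simp only [D, Matrix.submatrix_apply]
    rw [Nmat_apply_of_val_eq_succ] <;> simp [Fin.val_succAbove]
  have e₂ : D (Fin.last (m + 1)).castSucc (Fin.last (m + 1)).castSucc = (-1) ^ (m + 2) := by
    simp only [D, Matrix.submatrix_apply]
    rw [Nmat_apply_of_val_eq_succ] <;> simp [Fin.val_succAbove]
  rw [e₁, e₂, ← mul_assoc, ← pow_add, Odd.neg_one_pow ⟨m + 2, by ring⟩, neg_one_mul]

theorem permanent_Nmat_add_four (m : ℕ) :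
    (Nmat (m + 4)).permanent = 2 * (Nmat (m + 3)).permanent - (Nmat (m + 1)).permanent := by
  have hrow : ∀ j, j ≠ ⟨m + 1, by omega⟩ ∧ j ≠ Fin.last (m + 3) →
      Nmat (m + 4) (Fin.last (m + 3)) j *
        ((Nmat (m + 4)).submatrix (Fin.last (m + 3)).succAbove j.succAbove).permanent = 0 := by
    rintro j ⟨h₁, h₂⟩
    simp only [ne_eq, Fin.ext_iff, Fin.val_last] at h₁ h₂
    rw [Nmat_apply_eq_zero, zero_mul] <;> simp only [Fin.val_last] <;> omega
  rw [Matrix.permanent_succ_row _ (Fin.last (m + 3)),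
    Fintype.sum_eq_add _ _ (by simp [Fin.ext_iff]) hrow, Fin.succAbove_last,
    permanent_Nmat_submatrix_castSucc_succAbove, Nmat_apply_of_val_eq_add_two rfl,
    Nmat_apply_of_val_eq (by simp) rfl,
    Nmat_submatrix Fin.castSucc Fin.castSucc (fun _ => rfl) fun _ => rfl]
  ring

theorem sum_range_lucas_add_five (m : ℕ) :
    ∑ i ∈ range (m + 5), (lucas i : ℤ) =
      2 * ∑ i ∈ range (m + 4), (lucas i : ℤ) - ∑ i ∈ range (m + 2), (lucas i : ℤ) := by
  have h : lucas (m + 4) = lucas (m + 3) + lucas (m + 2) := rfl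
  simp only [sum_range_succ, h]
  push_cast
  ring

theorem eq_of_recurrence {α : Type*} {a b : ℕ → α} (g : α → α → α → α)
    (ha : ∀ m, a (m + 3) = g (a m) (a (m + 1)) (a (m + 2)))
    (hb : ∀ m, b (m + 3) = g (b m) (b (m + 1)) (b (m + 2)))
    (h₀ : a 0 = b 0) (h₁ : a 1 = b 1) (h₂ : a 2 = b 2) : a = b := by
  have agree : ∀ m, a m = b m ∧ a (m + 1) = b (m + 1) ∧ a (m + 2) = b (m + 2) := by
    intro m
    induction m with
    | zero => exact ⟨h₀, h₁, h₂⟩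
    | succ m ih => exact ⟨ih.2.1, ih.2.2, by rw [ha, hb, ih.1, ih.2.1, ih.2.2]⟩
  exact funext fun m => (agree m).1

theorem permanent_N (n : ℕ) (hn : 2 ≤ n) :
    Matrix.permanent (Nmat n) = ∑ i ∈ Finset.range (n + 1), (lucas i : ℤ) := by
  obtain ⟨m, rfl⟩ : ∃ m, n = m + 1 := ⟨n - 1, by omega⟩
  have hseq := eq_of_recurrence (a := fun m => (Nmat (m + 1)).permanent)
    (b := fun m => ∑ i ∈ range (m + 2), (lucas i : ℤ)) (fun x _ z => 2 * z - x)
    permanent_Nmat_add_four sum_range_lucas_add_five (by decide) (by decide) (by decide)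
  exact congrFun hseq m
end

section
/- Let £_n be the n×n matrix that has 1's on the subdiagonal, diagonal, and superdiagonal, except that the (1,2) entry is 0 and the (1,3) entry is 1, with all other entries 0. Then per £_n = L_{n-1}, the (n-1)st Lucas number. -/
open Finset Nat

def Lmat (n : ℕ) : Matrix (Fin n) (Fin n) ℤ := Matrix.of fun i j =>
  if (i : ℕ) = 0 then (if (j : ℕ) = 0 ∨ (j : ℕ) = 2 then 1 else 0)
  else if ((j : ℕ) + 1 = (i : ℕ) ∨ (j : ℕ) = (i : ℕ) ∨ (j : ℕ) = (i : ℕ) + 1) then 1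
  else 0

section Expansion

variable {R : Type*} [CommSemiring R]

private theorem permanent_succ_column_zero {n : ℕ} (A : Matrix (Fin n.succ) (Fin n.succ) R) :
    A.permanent = ∑ i : Fin n.succ, A i 0 * (A.submatrix i.succAbove Fin.succ).permanent := by
  rw [Matrix.permanent, Finset.univ_perm_fin_succ, ← Finset.univ_product_univ]
  simp only [Finset.sum_map, Equiv.toEmbedding_apply, Finset.sum_product]
  refine Finset.sum_congr rfl fun i _ => Fin.cases ?_ (fun i => ?_) i
  · simp only [Fin.prod_univ_succ, Matrix.permanent, Finset.mul_sum,
      Equiv.Perm.decomposeFin_symm_apply_zero, Fin.val_zero, one_mul,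
      Equiv.Perm.decomposeFin_symm_apply_succ, Fin.succAbove_zero, Matrix.submatrix_apply,
      Equiv.swap_self, Equiv.coe_refl, id]
  · rw [← Matrix.permanent_permute_cols i.cycleRange, Matrix.permanent, Finset.mul_sum]
    refine Finset.sum_congr rfl fun σ _ => ?_
    rw [Fin.prod_univ_succ, Equiv.Perm.decomposeFin_symm_apply_zero]
    congr 1
    refine Finset.prod_congr rfl fun i' _ => ?_
    simp only [Equiv.Perm.decomposeFin_symm_apply_succ, Matrix.submatrix_apply,
      Fin.succAbove_cycleRange, id]

private theorem permanent_succ_row_zero {n : ℕ} (A : Matrix (Fin n.succ) (Fin n.succ) R) :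
    A.permanent = ∑ j : Fin n.succ, A 0 j * (A.submatrix Fin.succ j.succAbove).permanent := by
  rw [← Matrix.permanent_transpose A, permanent_succ_column_zero]
  refine Finset.sum_congr rfl fun i _ => ?_
  rw [← Matrix.permanent_transpose]
  simp only [Matrix.transpose_apply, Matrix.transpose_submatrix, Matrix.transpose_transpose]

private theorem permanent_succ_row {n : ℕ} (A : Matrix (Fin n.succ) (Fin n.succ) R)
    (i : Fin n.succ) :
    A.permanent = ∑ j : Fin n.succ, A i j * (A.submatrix i.succAbove j.succAbove).permanent := by
  rw [← Matrix.permanent_permute_cols i.cycleRange⁻¹ A, permanent_succ_row_zero]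
  refine Finset.sum_congr rfl fun j _ => ?_
  congr 1
  · rw [Matrix.submatrix_apply, Equiv.Perm.inv_def, Fin.cycleRange_symm_zero, id]
  · congr 1
    ext i' j'
    simp only [Matrix.submatrix_apply, Equiv.Perm.inv_def, Fin.cycleRange_symm_succ, id]

private theorem permanent_eq_zero_of_column_zero {m : ℕ} (A : Matrix (Fin m) (Fin m) R)
    (j : Fin m) (h : ∀ i, A i j = 0) : A.permanent = 0 := by
  unfold Matrix.permanent
  exact Finset.sum_eq_zero fun σ _ => Finset.prod_eq_zero (Finset.mem_univ j) (h _)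

end Expansion

private theorem succAbove_val {m : ℕ} (p : Fin (m + 1)) (k : Fin m) :
    ((p.succAbove k) : ℕ) = if (k : ℕ) < (p : ℕ) then (k : ℕ) else (k : ℕ) + 1 := by
  unfold Fin.succAbove
  split <;> rename_i h <;>
    simp only [Fin.lt_def, Fin.coe_castSucc, Fin.val_succ] at h ⊢ <;>
    [rw [if_pos h]; rw [if_neg h]]

private theorem Lmat_rec (n : ℕ) :
    Matrix.permanent (Lmat (n + 5)) =
      Matrix.permanent (Lmat (n + 4)) + Matrix.permanent (Lmat (n + 3)) := by
  rw [permanent_succ_row (Lmat (n + 5)) (Fin.last (n + 4))]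
  rw [← Finset.sum_subset
      (Finset.subset_univ {(⟨n + 3, by omega⟩ : Fin (n + 5)), Fin.last (n + 4)})
      (fun x _ hx => by
        have hx' : (x : ℕ) ≠ n + 3 ∧ (x : ℕ) ≠ n + 4 := by
          simp only [Finset.mem_insert, Finset.mem_singleton, Fin.ext_iff, Fin.val_last,
            not_or] at hx
          exact hx
        have h0 : Lmat (n + 5) (Fin.last (n + 4)) x = 0 := by
          simp only [Lmat, Matrix.of_apply, Fin.val_last]
          split_ifs <;> first | omega | (simp_all; omega) | simp_all | tauto
        rw [h0, zero_mul])]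
  rw [Finset.sum_pair (by simp only [ne_eq, Fin.ext_iff, Fin.val_last]; omega)]
  have hA1 : Lmat (n + 5) (Fin.last (n + 4)) ⟨n + 3, by omega⟩ = 1 := by
    simp only [Lmat, Matrix.of_apply, Fin.val_last]
    split_ifs <;> first | omega | (simp_all; omega) | simp_all | tauto
  have hA2 : Lmat (n + 5) (Fin.last (n + 4)) (Fin.last (n + 4)) = 1 := by
    simp only [Lmat, Matrix.of_apply, Fin.val_last]
    split_ifs <;> first | omega | (simp_all; omega) | simp_all | tauto
  have hM2 : (Lmat (n + 5)).submatrix (Fin.last (n + 4)).succAbove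
      (Fin.last (n + 4)).succAbove = Lmat (n + 4) := by
    ext i j
    simp only [Matrix.submatrix_apply, Lmat, Matrix.of_apply, succAbove_val, Fin.val_last]
    split_ifs <;> first | omega | (simp_all; omega) | simp_all | tauto
  have hPB : ((Lmat (n + 5)).submatrix (Fin.last (n + 4)).succAbove
      (⟨n + 3, by omega⟩ : Fin (n + 5)).succAbove).permanent
        = Matrix.permanent (Lmat (n + 3)) := by
    rw [permanent_succ_row _ (Fin.last (n + 3))]
    rw [← Finset.sum_subset
        (Finset.subset_univ {(⟨n + 2, by omega⟩ : Fin (n + 4)), Fin.last (n + 3)})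
        (fun x _ hx => by
          have hx' : (x : ℕ) ≠ n + 2 ∧ (x : ℕ) ≠ n + 3 := by
            simp only [Finset.mem_insert, Finset.mem_singleton, Fin.ext_iff, Fin.val_last,
              not_or] at hx
            exact hx
          have h0 : (Lmat (n + 5)).submatrix (Fin.last (n + 4)).succAbove
              (⟨n + 3, by omega⟩ : Fin (n + 5)).succAbove (Fin.last (n + 3)) x = 0 := by
            simp only [Matrix.submatrix_apply, Lmat, Matrix.of_apply, succAbove_val,
              Fin.val_last]
            split_ifs <;> first | omega | (simp_all; omega) | simp_all | tauto
          rw [h0, zero_mul])]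
    rw [Finset.sum_pair (by simp only [ne_eq, Fin.ext_iff, Fin.val_last]; omega)]
    have hB1 : (Lmat (n + 5)).submatrix (Fin.last (n + 4)).succAbove
        (⟨n + 3, by omega⟩ : Fin (n + 5)).succAbove (Fin.last (n + 3))
          ⟨n + 2, by omega⟩ = 1 := by
      simp only [Matrix.submatrix_apply, Lmat, Matrix.of_apply, succAbove_val, Fin.val_last]
      split_ifs <;> first | omega | (simp_all; omega) | simp_all | tauto
    have hB2 : (Lmat (n + 5)).submatrix (Fin.last (n + 4)).succAbove
        (⟨n + 3, by omega⟩ : Fin (n + 5)).succAbove (Fin.last (n + 3))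
          (Fin.last (n + 3)) = 1 := by
      simp only [Matrix.submatrix_apply, Lmat, Matrix.of_apply, succAbove_val, Fin.val_last]
      split_ifs <;> first | omega | (simp_all; omega) | simp_all | tauto
    have hrow : ∀ i : Fin (n + 3),
        (((Fin.last (n + 4)).succAbove ((Fin.last (n + 3)).succAbove i)) : ℕ) = (i : ℕ) := by
      intro i
      simp only [succAbove_val, Fin.val_last]
      split_ifs <;> omega
    have hcol : ∀ j : Fin (n + 3),
        (((⟨n + 3, by omega⟩ : Fin (n + 5)).succAbove
          ((Fin.last (n + 3)).succAbove j)) : ℕ) = (j : ℕ) := by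
      intro j
      simp only [succAbove_val, Fin.val_last]
      split_ifs <;> omega
    have hcolz : (((⟨n + 3, by omega⟩ : Fin (n + 5)).succAbove
        ((⟨n + 2, by omega⟩ : Fin (n + 4)).succAbove (Fin.last (n + 2)))) : ℕ) = n + 4 := by
      simp only [succAbove_val, Fin.val_last]
      split_ifs <;> omega
    have hzero : (((Lmat (n + 5)).submatrix (Fin.last (n + 4)).succAbove
        (⟨n + 3, by omega⟩ : Fin (n + 5)).succAbove).submatrix
          (Fin.last (n + 3)).succAbove
          (⟨n + 2, by omega⟩ : Fin (n + 4)).succAbove).permanent = 0 := by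
      apply permanent_eq_zero_of_column_zero _ (Fin.last (n + 2))
      intro i
      simp only [Matrix.submatrix_apply, Lmat, Matrix.of_apply, hrow, hcolz]
      split_ifs <;> first | omega | (simp_all; omega) | simp_all | tauto
    have hLm : ((Lmat (n + 5)).submatrix (Fin.last (n + 4)).succAbove
        (⟨n + 3, by omega⟩ : Fin (n + 5)).succAbove).submatrix
          (Fin.last (n + 3)).succAbove (Fin.last (n + 3)).succAbove = Lmat (n + 3) := by
      ext i j
      simp only [Matrix.submatrix_apply, Lmat, Matrix.of_apply, hrow, hcol]
    rw [hB1, hB2, hzero, hLm, mul_zero, one_mul, zero_add]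
  rw [hA1, hA2, hM2, hPB, one_mul, one_mul, add_comm]

private theorem key : ∀ m : ℕ, Matrix.permanent (Lmat (m + 3)) = (lucas (m + 2) : ℤ) := by
  intro m
  induction m using Nat.strong_induction_on with
  | _ m ih =>
    match m with
    | 0 => decide
    | 1 => decide
    | (k + 2) =>
      have h := Lmat_rec k
      rw [show k + 2 + 3 = k + 5 from rfl, h, ih (k + 1) (by omega), ih k (by omega)]
      rw [show lucas (k + 2 + 2) = lucas (k + 3) + lucas (k + 2) from rfl]
      push_cast
      ring

theorem permanent_Lmat (n : ℕ) (hn : 3 ≤ n) :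
    Matrix.permanent (Lmat n) = (lucas (n - 1) : ℤ) := by
  obtain ⟨m, rfl⟩ : ∃ m, n = m + 3 := ⟨n - 3, by omega⟩
  rw [show m + 3 - 1 = m + 2 from rfl]
  exact key m
end

section
/- Let H_n be as in the paper and define its sequence of contractions on the last column. Then the (n−3)rd contraction of H_n is the 3×3 matrix [[2, −1, 0], [0, 2, 1], [F_{n−2}, F_{n−2} − F_{n−1}, F_{n−1}]], and its permanent equals F_{n+1}. -/
open Finset Nat

theorem Matrix.permanent_fin_three {R : Type*} [CommSemiring R] (A : Matrix (Fin 3) (Fin 3) R) :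
    A.permanent =
      A 0 0 * A 1 1 * A 2 2 + A 0 0 * A 1 2 * A 2 1
      + A 0 1 * A 1 0 * A 2 2 + A 0 1 * A 1 2 * A 2 0
      + A 0 2 * A 1 0 * A 2 1 + A 0 2 * A 1 1 * A 2 0 := by
  simp only [Matrix.permanent, Finset.univ_perm_fin_succ, Finset.sum_map, Fintype.sum_prod_type,
    Fin.sum_univ_succ, Fin.prod_univ_succ, Finset.univ_unique, Finset.sum_singleton]
  simp only [Fin.isValue, Equiv.Perm.default_eq, Function.Embedding.coeFn_mk,
    Equiv.Perm.decomposeFin_symm_of_one, Equiv.swap_self, Equiv.Perm.decomposeFin_symm_of_refl,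
    Equiv.refl_apply, Fin.succ_zero_eq_one, Fin.default_eq_zero, Finset.prod_singleton,
    Fin.succ_one_eq_two, Equiv.Perm.decomposeFin_symm_apply_zero,
    Equiv.Perm.decomposeFin_symm_apply_one, Equiv.swap_apply_left,
    Equiv.Perm.decomposeFin_symm_apply_succ, Equiv.swap_apply_def, Fin.succ_ne_zero, ↓reduceIte,
    Fin.reduceEq, one_ne_zero]
  ring

theorem permanent_contraction_eq_add_two_mul {R : Type*} [CommRing R] (a b : R) :
    Matrix.permanent !![(2 : R), -1, 0; 0, 2, 1; a, a - b, b] = a + 2 * b := by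
  rw [Matrix.permanent_fin_three]
  simp only [Fin.isValue, Matrix.of_apply, Matrix.cons_val', Matrix.cons_val_zero,
    Matrix.cons_val_fin_one, Matrix.cons_val_one, Matrix.cons_val, mul_one, mul_zero, zero_mul,
    add_zero, neg_mul, one_mul]
  ring

theorem Nat.fib_add_three (n : ℕ) : fib (n + 3) = fib n + 2 * fib (n + 1) := by
  rw [fib_add_two, fib_add_two]
  ring

theorem permanent_three_by_three_fib (n : ℕ) (hn : 2 ≤ n) :
    Matrix.permanent !![(2 : ℤ), -1, 0; 0, 2, 1;
        (Nat.fib (n - 2) : ℤ), (Nat.fib (n - 2) : ℤ) - (Nat.fib (n - 1) : ℤ),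
        (Nat.fib (n - 1) : ℤ)] =
      (Nat.fib (n + 1) : ℤ) := by
  obtain ⟨m, rfl⟩ := Nat.exists_eq_add_of_le' hn
  rw [permanent_contraction_eq_add_two_mul]
  simp only [Nat.add_sub_cancel, Nat.add_succ_sub_one, Nat.fib_add_three]
  push_cast
  ring
end
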